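/- arXiv:1201.4406 — 2 statements merged into one kernel-verified Lean document; each statement's English description precedes it below -/
import Mathlib

section
/- For every n ∈ ℕ with n ≥ 1 and all x > 0, the function G(x) = (−1)^{n+1}·(n−1)!·Σ_{k=1}^{n} (−1)^k·coth^{2k−1}(x)/((2k−1)·(k−1)!·(n−k)!) is an antiderivative of 1/sinh^{2n}(x), i.e. G'(x) = 1/sinh^{2n}(x) for all x > 0. -/
theorem antideriv_even_power (n : ℕ) (hn : 1 ≤ n) :
    ∀ x > 0, HasDerivAt
      (fun y => (-1 : ℝ) ^ (n + 1) * ((n - 1).factorial : ℝ) *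
        ∑ k ∈ Finset.Icc 1 n,
          (-1 : ℝ) ^ k * (Real.cosh y / Real.sinh y) ^ (2 * k - 1) /
            ((2 * (k : ℝ) - 1) * ((k - 1).factorial : ℝ) * ((n - k).factorial : ℝ)))
      (1 / Real.sinh x ^ (2 * n)) x := by
  intro x hx
  have hs0 : 0 < Real.sinh x := Real.sinh_pos_iff.2 hx
  have hs : Real.sinh x ≠ 0 := ne_of_gt hs0
  set s := Real.sinh x with hsdef
  set c := Real.cosh x with hcdef
  have hcoth : HasDerivAt (fun y => Real.cosh y / Real.sinh y) (-(1 / s ^ 2)) x := by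
    have h := (Real.hasDerivAt_cosh x).fun_div (Real.hasDerivAt_sinh x) hs
    refine h.congr_deriv (Eq.symm ?_)
    have hp := Real.cosh_sq_sub_sinh_sq x
    field_simp
    nlinarith [hp]
  have hderiv : HasDerivAt
      (fun y => (-1 : ℝ) ^ (n + 1) * ((n - 1).factorial : ℝ) *
        ∑ k ∈ Finset.Icc 1 n,
          (-1 : ℝ) ^ k * (Real.cosh y / Real.sinh y) ^ (2 * k - 1) /
            ((2 * (k : ℝ) - 1) * ((k - 1).factorial : ℝ) * ((n - k).factorial : ℝ)))
      ((-1 : ℝ) ^ (n + 1) * ((n - 1).factorial : ℝ) *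
        ∑ k ∈ Finset.Icc 1 n,
          (-1 : ℝ) ^ k * (((2 * k - 1 : ℕ) : ℝ) * (c / s) ^ (2 * k - 1 - 1) * (-(1 / s ^ 2))) /
            ((2 * (k : ℝ) - 1) * ((k - 1).factorial : ℝ) * ((n - k).factorial : ℝ))) x := by
    refine HasDerivAt.const_mul _ (HasDerivAt.fun_sum fun k hk => ?_)
    exact ((hcoth.pow (2 * k - 1)).const_mul ((-1 : ℝ) ^ k)).div_const _
  convert hderiv using 1
  -- algebraic identity
  have hpy : c ^ 2 - s ^ 2 = 1 := Real.cosh_sq_sub_sinh_sq x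
  rw [show Finset.Icc 1 n = Finset.Ico 1 (n+1) from by rw [Finset.Ico_add_one_right_eq_Icc],
    Finset.sum_Ico_eq_sum_range, Nat.add_sub_cancel, Finset.mul_sum]
  have hbin : (1 : ℝ) = ∑ i ∈ Finset.range n,
      (c ^ 2) ^ i * (-(s ^ 2)) ^ (n - 1 - i) * ((n - 1).choose i : ℝ) := by
    have h1 : (c ^ 2 + -(s ^ 2)) ^ (n - 1) = 1 := by rw [← sub_eq_add_neg, hpy, one_pow]
    rw [← h1, add_pow]
    rw [show n - 1 + 1 = n from by omega]
  have hstep : 1 / s ^ (2 * n) = ∑ i ∈ Finset.range n,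
      (c ^ 2) ^ i * (-(s ^ 2)) ^ (n - 1 - i) * ((n - 1).choose i : ℝ) / s ^ (2 * n) := by
    rw [← Finset.sum_div, ← hbin]
  rw [hstep]
  refine Finset.sum_congr rfl fun i hi => ?_
  have hin : i < n := Finset.mem_range.1 hi
  obtain ⟨m, rfl⟩ : ∃ m, n = i + m + 1 := ⟨n - i - 1, by omega⟩
  have e1 : i + m + 1 - 1 - i = m := by omega
  have e2 : i + m + 1 - 1 = i + m := by omega
  have e3 : 2 * (1 + i) - 1 = 2 * i + 1 := by omega
  have e4 : 2 * i + 1 - 1 = 2 * i := by omega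
  have e5 : 1 + i - 1 = i := by omega
  have e6 : i + m + 1 - (1 + i) = m := by omega
  rw [e1, e2, e3, e4, e5, e6]
  have hch : ((i + m).choose i : ℝ) * (Nat.factorial i : ℝ) * (Nat.factorial m : ℝ)
      = ((i + m).factorial : ℝ) := by
    have := Nat.choose_mul_factorial_mul_factorial (by omega : i ≤ i + m)
    rw [show i + m - i = m from by omega] at this
    exact_mod_cast congrArg (Nat.cast : ℕ → ℝ) this
  rw [show (2 * ((1 + i : ℕ) : ℝ) - 1) = ((2 * i + 1 : ℕ) : ℝ) from by push_cast; ring]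
  have hA : ((2 * i + 1 : ℕ) : ℝ) ≠ 0 := by exact_mod_cast (by omega : 2 * i + 1 ≠ 0)
  have hfi : (Nat.factorial i : ℝ) ≠ 0 := by positivity
  have hfm : (Nat.factorial m : ℝ) ≠ 0 := by positivity
  have hneg : (-(s ^ 2)) ^ m = (-1 : ℝ) ^ m * (s ^ 2) ^ m := by rw [neg_pow]
  rw [hneg, ← hch]
  rw [div_pow, pow_mul c, pow_mul s]
  have hpow : ∀ j : ℕ, ((-1 : ℝ)) ^ (j * 2) = 1 := fun j => by
    rw [mul_comm, pow_mul, neg_one_sq, one_pow]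
  field_simp
  ring_nf
  simp [hpow]
end

section
/- For every integer d ≥ 2 with d even, and ρ > 0: ∫_ρ^∞ dt/sinh^{d−1}(t) = (−1)^{d/2−1}·((d−3)!!/(d−2)!!)·[ log(coth(ρ/2)) + cosh(ρ)·Σ_{k=1}^{d/2−1} (−1)^k·(2k−2)!!/((2k−1)!!·sinh^{2k}(ρ)) ]. -/
/-- Double factorial: `dfact 0 = dfact 1 = 1`, `dfact (n+2) = (n+2) * dfact n`.
(With natural subtraction, `(-1)!!` occurring in the formulas is represented by
`dfact 0 = 1`, as intended.) -/
def dfact : ℕ → ℕ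
  | 0 => 1
  | 1 => 1
  | (n + 2) => (n + 2) * dfact n

open Real MeasureTheory Set Filter Topology

lemma dfact_pos (n : ℕ) : 0 < dfact n := by
  induction n using Nat.strong_induction_on with
  | _ n ih =>
    match n with
    | 0 => simp [dfact]
    | 1 => simp [dfact]
    | (k+2) =>
      have := ih k (by omega)
      simp only [dfact]
      positivity

lemma dfact_even (m : ℕ) : dfact (2*m+2) = (2*m+2) * dfact (2*m) := by
  simp [show 2*m+2 = (2*m)+2 by ring, dfact]

lemma dfact_odd (m : ℕ) : dfact (2*(m+1)-1) = (2*m+1) * dfact (2*m-1) := by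
  cases m with
  | zero => rfl
  | succ k =>
    have h1 : 2*(k+1+1)-1 = (2*k+1)+2 := by omega
    have h2 : 2*(k+1)-1 = 2*k+1 := by omega
    rw [h1, h2]
    simp [dfact]; omega

lemma tendsto_sinh_atTop : Tendsto Real.sinh atTop atTop := by
  apply tendsto_atTop_mono' atTop (_ : ∀ᶠ x : ℝ in atTop, (Real.exp x - 1)/2 ≤ Real.sinh x)
  · exact (tendsto_atTop_add_const_right atTop (-1) Real.tendsto_exp_atTop).atTop_div_const
      (by norm_num)
  · filter_upwards [eventually_ge_atTop (0:ℝ)] with x hx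
    rw [Real.sinh_eq]
    have : Real.exp (-x) ≤ 1 := Real.exp_le_one_iff.mpr (by linarith)
    linarith

lemma tendsto_inv_sinh_pow (n : ℕ) (hn : n ≠ 0) :
    Tendsto (fun x => 1 / Real.sinh x ^ n) atTop (𝓝 0) := by
  simpa [one_div] using (show Tendsto (fun x => (Real.sinh x ^ n)⁻¹) atTop (𝓝 0) from
    ((tendsto_pow_atTop hn).comp tendsto_sinh_atTop).inv_tendsto_atTop)

lemma tendsto_cosh_div_sinh_pow (j : ℕ) :
    Tendsto (fun x => Real.cosh x / Real.sinh x ^ (j+2)) atTop (𝓝 0) := by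
  have h1 : Tendsto (fun x => 1/Real.sinh x ^ (j+1) + 1/Real.sinh x ^ (j+2)) atTop (𝓝 0) := by
    simpa using (tendsto_inv_sinh_pow (j+1) (by omega)).add (tendsto_inv_sinh_pow (j+2) (by omega))
  apply squeeze_zero' ?_ ?_ h1
  · filter_upwards [eventually_ge_atTop (1:ℝ)] with x hx
    have hs : 0 < Real.sinh x := Real.sinh_pos_iff.mpr (by linarith)
    positivity
  · filter_upwards [eventually_ge_atTop (1:ℝ)] with x hx
    have hs : 0 < Real.sinh x := Real.sinh_pos_iff.mpr (by linarith)
    have hc : Real.cosh x ≤ Real.sinh x + 1 := by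
      have h := Real.cosh_sub_sinh x
      have : Real.exp (-x) ≤ 1 := Real.exp_le_one_iff.mpr (by linarith)
      linarith
    have heq : (Real.sinh x + 1)/Real.sinh x ^ (j+2)
        = 1/Real.sinh x ^ (j+1) + 1/Real.sinh x ^ (j+2) := by
      field_simp
      ring
    rw [← heq]
    gcongr

lemma tendsto_sinh_div_cosh : Tendsto (fun x => Real.sinh x / Real.cosh x) atTop (𝓝 1) := by
  have h0 : Tendsto (fun x : ℝ => Real.exp (-x) / Real.cosh x) atTop (𝓝 0) := by
    apply squeeze_zero (fun x => by positivity) (fun x => ?_)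
      Real.tendsto_exp_neg_atTop_nhds_zero
    exact div_le_self (Real.exp_pos _).le (Real.one_le_cosh x)
  have heq : ∀ x : ℝ, Real.sinh x / Real.cosh x = 1 - Real.exp (-x) / Real.cosh x := by
    intro x
    have hc := (Real.cosh_pos x).ne'
    have h := Real.cosh_sub_sinh x
    field_simp
    linarith
  simp only [heq]
  simpa using tendsto_const_nhds.sub h0

lemma base_case (ρ : ℝ) (hρ : 0 < ρ) :
    IntegrableOn (fun t => 1 / Real.sinh t) (Set.Ioi ρ) ∧
    (∫ t in Set.Ioi ρ, 1 / Real.sinh t)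
      = Real.log (Real.cosh (ρ/2) / Real.sinh (ρ/2)) := by
  set g : ℝ → ℝ := fun t => Real.log (Real.sinh (t/2)) - Real.log (Real.cosh (t/2)) with hg
  have hderiv : ∀ x ∈ Set.Ici ρ, HasDerivAt g (1 / Real.sinh x) x := by
    intro x hx
    have hx0 : 0 < x := lt_of_lt_of_le hρ hx
    have hs : 0 < Real.sinh (x/2) := Real.sinh_pos_iff.mpr (by linarith)
    have hc : 0 < Real.cosh (x/2) := Real.cosh_pos _
    have h1 : HasDerivAt (fun t : ℝ => t/2) (1/2) x := (hasDerivAt_id x).div_const 2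
    have hsinh : HasDerivAt (fun t => Real.sinh (t/2)) (Real.cosh (x/2) * (1/2)) x :=
      by have := (Real.hasDerivAt_sinh (x/2)).comp x h1; exact this
    have hcosh : HasDerivAt (fun t => Real.cosh (t/2)) (Real.sinh (x/2) * (1/2)) x :=
      by have := (Real.hasDerivAt_cosh (x/2)).comp x h1; exact this
    have hd := (hsinh.log hs.ne').sub (hcosh.log hc.ne')
    convert hd using 1
    · rfl
    · rfl
    · rfl
    have hsx : Real.sinh x = 2 * Real.sinh (x/2) * Real.cosh (x/2) := by
      rw [← Real.sinh_two_mul]; ring_nf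
    have hsq := Real.cosh_sq (x/2)
    rw [hsx]
    field_simp
    linear_combination (-1 : ℝ) * hsq
  have hpos : ∀ x ∈ Set.Ioi ρ, 0 ≤ 1 / Real.sinh x := by
    intro x hx
    have : 0 < Real.sinh x := Real.sinh_pos_iff.mpr (lt_trans hρ hx)
    positivity
  have htend : Tendsto g atTop (𝓝 0) := by
    have htt : Tendsto (fun t : ℝ => t/2) atTop atTop :=
      tendsto_id.atTop_div_const (by norm_num)
    have hcomp : Tendsto (fun t : ℝ => Real.log (Real.sinh (t/2) / Real.cosh (t/2)))
        atTop (𝓝 0) := by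
      have := (Real.continuousAt_log one_ne_zero).tendsto.comp (tendsto_sinh_div_cosh.comp htt)
      simpa [Function.comp_def] using this
    apply hcomp.congr'
    filter_upwards [eventually_gt_atTop (0:ℝ)] with x hx
    have hs : 0 < Real.sinh (x/2) := Real.sinh_pos_iff.mpr (by linarith)
    rw [hg, Real.log_div hs.ne' (Real.cosh_pos _).ne']
  refine ⟨integrableOn_Ioi_deriv_of_nonneg' hderiv hpos htend, ?_⟩
  rw [integral_Ioi_of_hasDerivAt_of_nonneg' hderiv hpos htend]
  have hs : 0 < Real.sinh (ρ/2) := Real.sinh_pos_iff.mpr (by linarith)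
  rw [hg, Real.log_div (Real.cosh_pos _).ne' hs.ne']
  ring

lemma reduction (ρ : ℝ) (hρ : 0 < ρ) (n : ℕ) (hn : 1 ≤ n)
    (hint : IntegrableOn (fun t => 1 / Real.sinh t ^ n) (Set.Ioi ρ)) :
    IntegrableOn (fun t => 1 / Real.sinh t ^ (n+2)) (Set.Ioi ρ) ∧
    (n : ℝ) * (∫ t in Set.Ioi ρ, 1 / Real.sinh t ^ n)
      + ((n : ℝ) + 1) * (∫ t in Set.Ioi ρ, 1 / Real.sinh t ^ (n+2))
      = Real.cosh ρ / Real.sinh ρ ^ (n+1) := by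
  set φ : ℝ → ℝ := fun t =>
    (n : ℝ) * (1 / Real.sinh t ^ n) + ((n : ℝ) + 1) * (1 / Real.sinh t ^ (n+2)) with hφ
  set g : ℝ → ℝ := fun t => -(Real.cosh t / Real.sinh t ^ (n+1)) with hg
  have hderiv : ∀ x ∈ Set.Ici ρ, HasDerivAt g (φ x) x := by
    intro x hx
    have hx0 : 0 < x := lt_of_lt_of_le hρ hx
    have hs : 0 < Real.sinh x := Real.sinh_pos_iff.mpr hx0
    have hpow : HasDerivAt (fun t => Real.sinh t ^ (n+1))
        ((n+1 : ℕ) * Real.sinh x ^ n * Real.cosh x) x := by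
      have := (Real.hasDerivAt_sinh x).fun_pow (n+1)
      simpa using this
    have hd := ((Real.hasDerivAt_cosh x).div hpow (by positivity)).neg
    convert hd using 1
    · rfl
    · rfl
    · rfl
    have hsq := Real.cosh_sq x
    rw [hφ]
    field_simp
    push_cast
    linear_combination (-((((n:ℝ)+1) * Real.sinh x ^ n) * (Real.sinh x ^ (n+1))^2)) * hsq
  have hpos : ∀ x ∈ Set.Ioi ρ, 0 ≤ φ x := by
    intro x hx
    have hs : 0 < Real.sinh x := Real.sinh_pos_iff.mpr (lt_trans hρ hx)
    have h1 : (0:ℝ) ≤ (n:ℝ) := Nat.cast_nonneg n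
    have h2 : (0:ℝ) < Real.sinh x ^ n := pow_pos hs n
    have h3 : (0:ℝ) < Real.sinh x ^ (n+2) := pow_pos hs (n+2)
    rw [hφ]
    positivity
  have htend : Tendsto g atTop (𝓝 0) := by
    obtain ⟨j, hj⟩ : ∃ j, n + 1 = j + 2 := ⟨n - 1, by omega⟩
    rw [hg]
    simp only [hj]
    simpa using (tendsto_cosh_div_sinh_pow j).neg
  have hsρ : 0 < Real.sinh ρ := Real.sinh_pos_iff.mpr hρ
  have hφint : IntegrableOn φ (Set.Ioi ρ) := integrableOn_Ioi_deriv_of_nonneg' hderiv hpos htend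
  have hIφ : (∫ t in Set.Ioi ρ, φ t) = Real.cosh ρ / Real.sinh ρ ^ (n+1) := by
    rw [integral_Ioi_of_hasDerivAt_of_nonneg' hderiv hpos htend, hg]
    ring
  have hint2 : IntegrableOn (fun t => 1 / Real.sinh t ^ (n+2)) (Set.Ioi ρ) := by
    have h : IntegrableOn (fun x => ((n:ℝ)+1)⁻¹ * (φ x - (n:ℝ) * (1 / Real.sinh x ^ n)))
        (Set.Ioi ρ) := (hφint.sub (hint.const_mul (n:ℝ))).const_mul (((n:ℝ)+1)⁻¹)
    apply h.congr_fun ?_ measurableSet_Ioi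
    intro x hx
    have hn1 : ((n:ℝ)+1) ≠ 0 := by positivity
    simp only [hφ]
    field_simp
    ring
  rw [← hIφ, hφ]
  rw [integral_add (hint.const_mul _) (hint2.const_mul _),
    integral_const_mul, integral_const_mul]
  exact ⟨hint2, rfl⟩

lemma aux_formula (ρ : ℝ) (hρ : 0 < ρ) (m : ℕ) :
    IntegrableOn (fun t => 1 / Real.sinh t ^ (2*m+1)) (Set.Ioi ρ) ∧
    (∫ t in Set.Ioi ρ, 1 / Real.sinh t ^ (2*m+1)) =
      (-1:ℝ)^m * ((dfact (2*m-1) : ℝ) / (dfact (2*m) : ℝ)) *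
        (Real.log (Real.cosh (ρ/2) / Real.sinh (ρ/2)) +
          Real.cosh ρ * ∑ k ∈ Finset.Icc 1 m,
            (-1:ℝ)^k * (dfact (2*k-2) : ℝ) /
              ((dfact (2*k-1) : ℝ) * Real.sinh ρ ^ (2*k))) := by
  induction m with
  | zero =>
    obtain ⟨h1, h2⟩ := base_case ρ hρ
    refine ⟨by simpa using h1, ?_⟩
    simpa [dfact] using h2
  | succ m ih =>
    obtain ⟨hI, hEq⟩ := ih
    obtain ⟨hI2, hrel⟩ := reduction ρ hρ (2*m+1) (by omega) hI
    have hidx : 2*(m+1)+1 = (2*m+1)+2 := by ring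
    refine ⟨by rw [hidx]; exact hI2, ?_⟩
    have hs : 0 < Real.sinh ρ := Real.sinh_pos_iff.mpr hρ
    set L := Real.log (Real.cosh (ρ/2) / Real.sinh (ρ/2)) with hL
    set C := Real.cosh ρ with hC
    set S := ∑ k ∈ Finset.Icc 1 m,
        (-1:ℝ)^k * (dfact (2*k-2) : ℝ) /
          ((dfact (2*k-1) : ℝ) * Real.sinh ρ ^ (2*k)) with hS
    have ha : (0:ℝ) < (dfact (2*m-1) : ℝ) := by exact_mod_cast dfact_pos _
    have hb : (0:ℝ) < (dfact (2*m) : ℝ) := by exact_mod_cast dfact_pos _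
    -- value of the new integral from the recurrence
    have h2 : (∫ t in Set.Ioi ρ, 1 / Real.sinh t ^ ((2*m+1)+2))
        = (C / Real.sinh ρ ^ (2*m+2)
            - ((2*m+1 : ℕ) : ℝ) * (∫ t in Set.Ioi ρ, 1 / Real.sinh t ^ (2*m+1)))
          / (((2*m+1 : ℕ) : ℝ) + 1) := by
      have hne : (((2*m+1 : ℕ) : ℝ) + 1) ≠ 0 := by positivity
      rw [eq_div_iff hne]
      rw [show (2*m+1)+1 = 2*m+2 from rfl] at hrel
      linarith [hrel]
    rw [hidx, h2, hEq]
    rw [Finset.sum_Icc_succ_top (by omega : 1 ≤ m+1)]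
    rw [show 2*(m+1)-2 = 2*m from by omega, dfact_odd m,
      show 2*(m+1) = 2*m+2 from by ring, dfact_even m]
    push_cast
    rcases Nat.even_or_odd m with hm | hm
    · rw [hm.neg_one_pow, (hm.add_one).neg_one_pow]
      field_simp
      ring
    · rw [hm.neg_one_pow, (hm.add_one).neg_one_pow]
      field_simp
      ring

theorem integral_I_d_even (d : ℕ) (hd : 2 ≤ d) (hde : Even d) (ρ : ℝ) (hρ : 0 < ρ) :
    (∫ t in Set.Ioi ρ, 1 / Real.sinh t ^ (d - 1)) =
      (-1 : ℝ) ^ (d / 2 - 1) * ((dfact (d - 3) : ℝ) / (dfact (d - 2) : ℝ)) *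
        (Real.log (Real.cosh (ρ / 2) / Real.sinh (ρ / 2)) +
          Real.cosh ρ * ∑ k ∈ Finset.Icc 1 (d / 2 - 1),
            (-1 : ℝ) ^ k * (dfact (2 * k - 2) : ℝ) /
              ((dfact (2 * k - 1) : ℝ) * Real.sinh ρ ^ (2 * k))) := by
  obtain ⟨c, hc⟩ := hde
  obtain ⟨m, hm⟩ : ∃ m, c = m + 1 := ⟨c - 1, by omega⟩
  subst hm
  have h1 : d - 1 = 2*m+1 := by omega
  have h2 : d - 2 = 2*m := by omega
  have h3 : d - 3 = 2*m - 1 := by omega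
  have h4 : d / 2 - 1 = m := by omega
  rw [h1, h2, h3, h4]
  exact (aux_formula ρ hρ m).2
end
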